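/- arXiv:2002.09722 — 4 statements merged into one kernel-verified Lean document; each statement's English description precedes it below -/
import Mathlib

section
/- For every integer n ≥ 4 there exists a finite set X with |X| = n and a family E of 4-element subsets of X with |E| = C(n−1, 3) such that the 4-uniform hypergraph (X, E) admits no no-rainbow 4-coloring. (Hence the lower bound |Q_S| ≥ C(n−1, 3) for decisive taxon coverage patterns is tight.) -/
/-!
Fix a vertex `a` and take as hyperedges all `4`-sets containing `a`; there are `C(n-1, 3)` of
them. Given any surjective `4`-coloring `c`, pick one vertex of each colour, choosing `a` itself
for the colour `c a`. These four vertices form a hyperedge containing `a` on which all colours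
occur, so no `4`-coloring avoids rainbow hyperedges.
-/

open Finset Function

section Star

variable {α : Type*} [Fintype α] [DecidableEq α]

/-- All `(k + 1)`-sets containing `a`: `k` counts the vertices besides the centre. -/
def completeStar (a : α) (k : ℕ) : Finset (Finset α) :=
  ((univ.erase a).powersetCard k).image (insert a)

theorem mem_completeStar {a : α} {k : ℕ} {e : Finset α} :
    e ∈ completeStar a k ↔ a ∈ e ∧ e.card = k + 1 := by
  constructor
  · simp only [completeStar, mem_image, mem_powersetCard]
    rintro ⟨s, ⟨hs, rfl⟩, rfl⟩
    have has : a ∉ s := fun h => (mem_erase.1 (hs h)).1 rfl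
    exact ⟨mem_insert_self a s, card_insert_of_notMem has⟩
  · rintro ⟨hae, hcard⟩
    refine mem_image.2 ⟨e.erase a, mem_powersetCard.2 ⟨?_, ?_⟩, insert_erase hae⟩
    · exact erase_subset_erase a (subset_univ e)
    · rw [card_erase_of_mem hae, hcard, Nat.add_sub_cancel]

theorem card_completeStar (a : α) (k : ℕ) :
    (completeStar a k).card = (Fintype.card α - 1).choose k := by
  have hinj : Set.InjOn (insert a) ((univ.erase a).powersetCard k : Set (Finset α)) := by
    intro s hs t ht hst
    have has : a ∉ s := fun h => (mem_erase.1 ((mem_powersetCard.1 hs).1 h)).1 rfl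
    have hat : a ∉ t := fun h => (mem_erase.1 ((mem_powersetCard.1 ht).1 h)).1 rfl
    rw [← erase_insert has, ← erase_insert hat, hst]
  rw [completeStar, card_image_of_injOn hinj, card_powersetCard, card_erase_of_mem (mem_univ a),
    card_univ]

end Star

def IsRainbow {α β : Type*} (c : α → β) (e : Finset α) : Prop :=
  ∀ i, ∃ v ∈ e, c v = i

theorem exists_isRainbow_mem_card {α β : Type*} [DecidableEq α] [Fintype β] [DecidableEq β]
    {c : α → β} (hc : Surjective c) (a : α) :
    ∃ e : Finset α, a ∈ e ∧ e.card = Fintype.card β ∧ IsRainbow c e := by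
  set g : β → α := update (surjInv hc) (c a) a
  have hcg : LeftInverse c g := by
    intro i
    by_cases hi : i = c a
    · subst hi; simp [g]
    · simp [g, hi, surjInv_eq hc]
  refine ⟨univ.image g, mem_image.2 ⟨c a, mem_univ _, update_self _ _ _⟩, ?_,
    fun i => ⟨g i, mem_image_of_mem g (mem_univ i), hcg i⟩⟩
  rw [card_image_of_injective _ hcg.injective, card_univ]

/-- For every `n ≥ 4` there is a vertex set of size `n` and a family `E`
of 4-element subsets with `|E| = C(n-1,3)` such that the 4-uniform hypergraph `(X, E)`
admits no no-rainbow 4-coloring. -/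
theorem exists_tight_hypergraph_no_noRainbow (n : ℕ) (hn : 4 ≤ n) :
    ∃ E : Finset (Finset (Fin n)),
      (∀ e ∈ E, e.card = 4) ∧
      E.card = (n - 1).choose 3 ∧
      ¬ ∃ c : Fin n → Fin 4, Function.Surjective c ∧
          ∀ e ∈ E, ¬ (∀ i : Fin 4, ∃ v ∈ e, c v = i) := by
  let a : Fin n := ⟨0, by omega⟩
  refine ⟨completeStar a 3, fun e he => (mem_completeStar.1 he).2, ?_, ?_⟩
  · rw [card_completeStar, Fintype.card_fin]
  · rintro ⟨c, hc, hno⟩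
    obtain ⟨e, hae, hcard, hrainbow⟩ := exists_isRainbow_mem_card hc a
    rw [Fintype.card_fin] at hcard
    exact hno e (mem_completeStar.2 ⟨hae, hcard⟩) hrainbow
end

section
/- For all integers n and r with n ≥ r ≥ 1 there exists an r-uniform hypergraph H = (X, E) on n vertices with exactly A(n, r) hyperedges that does not admit a no-rainbow r-coloring. -/
/-!
Fix a vertex `z` and take as hyperedges all `r`-sets through `z`; there are `C(n-1, r-1)` of
them, which is `A n r` since `A` satisfies Pascal's recursion. A surjective `r`-coloring `c` has a
transversal of the colors containing `z` (choose one vertex of each color, and `z` for the color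
`c z`), and this transversal is a rainbow hyperedge.
-/

/-- `A n r` is defined for `n ≥ r ≥ 1` by `A n r = 1` if `r = 1` or `n = r`, and
`A n r = A (n-1) (r-1) + A (n-1) r` otherwise. -/
def A : ℕ → ℕ → ℕ
  | _, 0 => 1
  | _, 1 => 1
  | 0, _ + 2 => 1
  | n + 1, r + 2 => if n + 1 = r + 2 then 1 else A n (r + 1) + A n (r + 2)

open Finset Function

theorem A_succ_succ_eq_choose : ∀ m k : ℕ, k ≤ m → A (m + 1) (k + 1) = m.choose k
  | m, 0, _ => by simp [A]
  | 0, _ + 1, h => by omega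
  | p + 1, j + 1, h => by
    rw [A]
    split_ifs with hpj
    · obtain rfl : p = j := by omega
      simp
    · rw [A_succ_succ_eq_choose p j (by omega), A_succ_succ_eq_choose p (j + 1) (by omega),
        Nat.choose_succ_succ]

section FullStar

variable {α : Type*} [Fintype α] [DecidableEq α]

def fullStar (z : α) (k : ℕ) : Finset (Finset α) :=
  ((univ.erase z).powersetCard k).image (insert z)

theorem mem_fullStar {z : α} {k : ℕ} {e : Finset α} :
    e ∈ fullStar z k ↔ e.card = k + 1 ∧ z ∈ e := by
  simp only [fullStar, mem_image, mem_powersetCard, subset_erase, subset_univ, true_and]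
  constructor
  · rintro ⟨s, ⟨hzs, rfl⟩, rfl⟩
    exact ⟨card_insert_of_notMem hzs, mem_insert_self z s⟩
  · rintro ⟨he, hze⟩
    refine ⟨e.erase z, ⟨notMem_erase z e, ?_⟩, insert_erase hze⟩
    rw [card_erase_of_mem hze, he, Nat.add_sub_cancel]

theorem card_fullStar (z : α) (k : ℕ) :
    #(fullStar z k) = (Fintype.card α - 1).choose k := by
  rw [fullStar, card_image_of_injOn, card_powersetCard, card_erase_of_mem (mem_univ z),
    card_univ]
  intro s hs t ht hst
  simp only [mem_coe, mem_powersetCard, subset_erase] at hs ht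
  rw [← erase_insert hs.1.2, ← erase_insert ht.1.2]
  exact congrArg (erase · z) hst

end FullStar

theorem exists_rainbow_finset_mem_of_surjective {α β : Type*} [DecidableEq α] [Fintype β]
    [DecidableEq β] {c : α → β} (hc : Surjective c) (z : α) :
    ∃ s : Finset α, z ∈ s ∧ s.card = Fintype.card β ∧ ∀ i, ∃ v ∈ s, c v = i := by
  set f := update (surjInv hc) (c z) z
  have hcf : ∀ i, c (f i) = i := by
    intro i
    rcases eq_or_ne i (c z) with rfl | hi
    · simp [f]
    · simp [f, hi, surjInv_eq hc]
  have hf : Injective f := LeftInverse.injective hcf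
  refine ⟨univ.image f, mem_image.2 ⟨c z, mem_univ _, by simp [f]⟩, ?_, ?_⟩
  · rw [card_image_of_injective _ hf, card_univ]
  · exact fun i => ⟨f i, mem_image_of_mem f (mem_univ i), hcf i⟩

/-- For all `n ≥ r ≥ 1`, there is an `r`-uniform hypergraph on `n`
vertices with exactly `A n r` hyperedges that admits no no-rainbow `r`-coloring. -/
theorem exists_hypergraph_A_edges_no_noRainbow (n r : ℕ) (hr : 1 ≤ r) (hnr : r ≤ n) :
    ∃ E : Finset (Finset (Fin n)),
      (∀ e ∈ E, e.card = r) ∧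
      E.card = A n r ∧
      ¬ ∃ c : Fin n → Fin r, Function.Surjective c ∧
          ∀ e ∈ E, ¬ (∀ i : Fin r, ∃ v ∈ e, c v = i) := by
  obtain ⟨k, rfl⟩ : ∃ k, r = k + 1 := ⟨r - 1, by omega⟩
  obtain ⟨m, rfl⟩ : ∃ m, n = m + 1 := ⟨n - 1, by omega⟩
  refine ⟨fullStar 0 k, fun e he => (mem_fullStar.1 he).1, ?_, ?_⟩
  · rw [card_fullStar, Fintype.card_fin, Nat.add_sub_cancel, A_succ_succ_eq_choose m k (by omega)]
  · rintro ⟨c, hc, hnone⟩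
    obtain ⟨s, hzs, hs, hrainbow⟩ := exists_rainbow_finset_mem_of_surjective hc 0
    rw [Fintype.card_fin] at hs
    exact hnone s (mem_fullStar.2 ⟨hs, hzs⟩) hrainbow
end

section
/- Let H = (X, E) be a 4-uniform hypergraph with |X| ≥ 4 and |E| = k. If the number of equivalence classes of vertices under the relation 'belongs to exactly the same hyperedges' exceeds 2^{k−1} (i.e., n̂ > 2^{k−1}), then H admits a no-rainbow 4-coloring. -/
/-!
Two vertices `u ≠ v` such that no hyperedge contains both already give a no-rainbow
4-coloring: colour `u` and `v` with colours of their own and split the (at least two)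
remaining vertices between the other two colours; every hyperedge misses `u` or `v`, hence
misses its colour. Such a pair exists as soon as the incidence sets of two vertices are
complementary in `E`, and a family of subsets of `E` without a complementary pair has at
most `2 ^ (|E| - 1)` members, since it is disjoint from the family of complements.
-/

open Finset

namespace Finset

variable {β : Type*} [DecidableEq β] {E : Finset β} {𝒜 : Finset (Finset β)}

theorem two_mul_card_le_of_sdiff_notMem (h𝒜 : ∀ S ∈ 𝒜, S ⊆ E)
    (hcompl : ∀ S ∈ 𝒜, E \ S ∉ 𝒜) : 2 * #𝒜 ≤ 2 ^ #E := by
  have hinj : Set.InjOn (E \ ·) 𝒜 := fun S hS T hT hST => by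
    simpa only [sdiff_sdiff_eq_self (h𝒜 S hS), sdiff_sdiff_eq_self (h𝒜 T hT)]
      using congrArg (E \ ·) hST
  have hdisj : Disjoint 𝒜 (𝒜.image (E \ ·)) := disjoint_left.mpr fun S hS hS' => by
    obtain ⟨T, hT, rfl⟩ := mem_image.mp hS'
    exact hcompl T hT hS
  have hsub : 𝒜 ∪ 𝒜.image (E \ ·) ⊆ E.powerset := union_subset
    (fun S hS => mem_powerset.mpr (h𝒜 S hS))
    (fun _ hS => by
      obtain ⟨T, -, rfl⟩ := mem_image.mp hS
      exact mem_powerset.mpr sdiff_subset)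
  calc 2 * #𝒜 = #(𝒜 ∪ 𝒜.image (E \ ·)) := by
        rw [card_union_of_disjoint hdisj, card_image_of_injOn hinj, two_mul]
    _ ≤ 2 ^ #E := card_powerset E ▸ card_le_card hsub

theorem exists_sdiff_mem_of_two_pow_lt_card (h𝒜 : ∀ S ∈ 𝒜, S ⊆ E)
    (hcard : 2 ^ (#E - 1) < #𝒜) : ∃ S ∈ 𝒜, E \ S ∈ 𝒜 ∧ S ≠ E \ S := by
  have hE : E.Nonempty := by
    rw [nonempty_iff_ne_empty]
    rintro rfl
    have : #𝒜 ≤ 1 := by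
      simpa using card_le_card fun S hS => mem_powerset.mpr (h𝒜 S hS)
    simp only [card_empty, zero_tsub, pow_zero] at hcard
    omega
  by_contra! hcompl
  have hcompl' : ∀ S ∈ 𝒜, E \ S ∉ 𝒜 := fun S hS hS' => by
    have hSE : S = E \ S := hcompl S hS hS'
    have hES : E ⊆ S := fun x hx => by
      by_contra hxS
      exact hxS (hSE ▸ mem_sdiff.mpr ⟨hx, hxS⟩)
    obtain ⟨x, hx⟩ := hE
    exact (mem_sdiff.mp (hSE ▸ hES hx)).2 (hES hx)
  have hhalf := two_mul_card_le_of_sdiff_notMem h𝒜 hcompl'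
  have hpow : 2 ^ #E = 2 * 2 ^ (#E - 1) := by
    rw [← pow_succ', Nat.sub_add_cancel hE.card_pos]
  omega

end Finset

theorem not_forall_exists_of_unique_color {α ι : Type*} {c : α → ι} {u : α} {e : Finset α}
    (hu : ∀ x, c x = c u → x = u) (hue : u ∉ e) : ¬ ∀ i, ∃ x ∈ e, c x = i := fun h => by
  obtain ⟨x, hx, hcx⟩ := h (c u)
  exact hue (hu x hcx ▸ hx)

theorem exists_noRainbow_of_forall_mem_imp_notMem {α : Type*} [Fintype α] [DecidableEq α]
    (E : Finset (Finset α)) (hX : 4 ≤ Fintype.card α) {u v : α} (huv : u ≠ v)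
    (hE : ∀ e ∈ E, u ∈ e → v ∉ e) :
    ∃ c : α → Fin 4, Function.Surjective c ∧
      ∀ e ∈ E, ¬ (∀ i : Fin 4, ∃ x ∈ e, c x = i) := by
  obtain ⟨w, hw, w', hw', hww'⟩ : ∃ w ∈ univ \ {u, v}, ∃ w' ∈ univ \ {u, v}, w ≠ w' := by
    apply one_lt_card.mp
    rw [card_sdiff_of_subset (subset_univ _), card_univ, card_pair huv]
    omega
  simp only [mem_sdiff, mem_univ, mem_insert, mem_singleton, true_and, not_or] at hw hw'
  let c : α → Fin 4 := fun x => if x = u then 0 else if x = v then 1 else if x = w then 2 else 3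
  refine ⟨c, fun i => ?_, fun e he => ?_⟩
  · fin_cases i
    · exact ⟨u, by simp [c]⟩
    · exact ⟨v, by simp [c, huv.symm]⟩
    · exact ⟨w, by simp [c, hw.1, hw.2]⟩
    · exact ⟨w', by simp [c, hw'.1, hw'.2, hww'.symm]⟩
  by_cases hue : u ∈ e
  · refine not_forall_exists_of_unique_color (fun x hx => ?_) (hE e he hue)
    simp only [c, huv.symm, if_true, if_false] at hx
    split_ifs at hx <;> simp_all
  · refine not_forall_exists_of_unique_color (fun x hx => ?_) hue
    simp only [c, if_true] at hx
    split_ifs at hx <;> simp_all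

theorem noRainbow_of_many_classes_general {α : Type*} [Fintype α] [DecidableEq α]
    (E : Finset (Finset α))
    (hX : 4 ≤ Fintype.card α) (k : ℕ) (hk : E.card = k)
    (hclasses :
      2 ^ (k - 1) <
        (Finset.univ.image (fun v : α => E.filter (fun e => v ∈ e))).card) :
    ∃ c : α → Fin 4, Function.Surjective c ∧
      ∀ e ∈ E, ¬ (∀ i : Fin 4, ∃ v ∈ e, c v = i) := by
  subst hk
  obtain ⟨S, hS, hS', hSS'⟩ := exists_sdiff_mem_of_two_pow_lt_card
    (by simp only [mem_image]; rintro _ ⟨v, -, rfl⟩; exact filter_subset _ _) hclasses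
  obtain ⟨u, -, rfl⟩ := mem_image.mp hS
  obtain ⟨v, -, hv⟩ := mem_image.mp hS'
  have huv : u ≠ v := fun huv => hSS' (by subst huv; exact hv)
  refine exists_noRainbow_of_forall_mem_imp_notMem E hX huv fun e he hue hve => ?_
  have : e ∈ E.filter (v ∈ ·) := mem_filter.mpr ⟨he, hve⟩
  rw [hv, mem_sdiff] at this
  exact this.2 (mem_filter.mpr ⟨he, hue⟩)

/-- Let `(X, E)` be a 4-uniform hypergraph with `|X| ≥ 4` and
`|E| = k`.  If the number of equivalence classes of vertices under the relation
"belongs to exactly the same hyperedges" exceeds `2^(k-1)`, then `(X, E)` admits a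
no-rainbow 4-coloring.  (Each equivalence class is identified with the common set of
incident hyperedges, so the number of classes is the cardinality of the image of
`v ↦ {e ∈ E : v ∈ e}`.) -/
theorem noRainbow_of_many_classes {α : Type*} [Fintype α] [DecidableEq α]
    (E : Finset (Finset α)) (hunif : ∀ e ∈ E, e.card = 4)
    (hX : 4 ≤ Fintype.card α) (k : ℕ) (hk : E.card = k)
    (hclasses :
      2 ^ (k - 1) <
        (Finset.univ.image (fun v : α => E.filter (fun e => v ∈ e))).card) :
    ∃ c : α → Fin 4, Function.Surjective c ∧
      ∀ e ∈ E, ¬ (∀ i : Fin 4, ∃ v ∈ e, c v = i) :=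
  noRainbow_of_many_classes_general E hX k hk hclasses
end

section
/- Let H = (X, E) be a 4-uniform hypergraph admitting a no-rainbow 4-coloring c, let Ĥ = (X̂, Ê) be its reduced hypergraph, let R ⊆ X contain exactly one vertex from each equivalence class, and let ĉ : X̂ → {1, 2, 3, 4} be defined by ĉ([v]) = c(r) where r is the representative in R of the class [v]. If ĉ uses exactly 3 colors and some hyperedge ê ∈ Ê contains classes of all 3 of these colors, then Ĥ admits a no-rainbow 4-coloring. -/
/-!
Let `i` be the colour missing from the reduced colouring and `w` a vertex with `c w = i`. The
representative `r` of the class of `w` has a colour other than `i`, so `r ≠ w`. Every colour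
other than `i` occurs on the classes of the given hyperedge `ê`, hence (through representatives)
on `e` itself; as `c` is not rainbow on `e`, the class of `w` is not in `ê`. Recolour the class
of `w` with `i`: the colouring becomes surjective thanks to `ê`. A rainbow hyperedge `f̂` would
have to contain the class of `w`, hence `f` would contain both `w` and `r`, so `f̂` would have at
most three classes and could not carry four colours.
-/

open Finset Function

theorem Finset.exists_forall_mem_iff_ne_of_card_add_one {κ : Type*} [Fintype κ] [DecidableEq κ]
    {s : Finset κ} (h : s.card + 1 = Fintype.card κ) : ∃ i, ∀ j, j ∈ s ↔ j ≠ i := by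
  obtain ⟨i, hi⟩ := card_eq_one.mp (by rw [card_compl]; omega : sᶜ.card = 1)
  exact ⟨i, fun j => by rw [← not_iff_not, ← mem_compl, hi, mem_singleton, not_not]⟩

section Reduction

variable {α κ : Type*} [DecidableEq α]

def incidence (E : Finset (Finset α)) (v : α) : Finset (Finset α) := E.filter (v ∈ ·)

variable {E : Finset (Finset α)}

theorem mem_incidence {v : α} {e : Finset α} (he : e ∈ E) : e ∈ incidence E v ↔ v ∈ e := by
  simp [incidence, he]

theorem mem_of_incidence_eq {u v : α} (huv : incidence E u = incidence E v) {e : Finset α}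
    (he : e ∈ E) (hu : u ∈ e) : v ∈ e := by
  rwa [← mem_incidence he, ← huv, mem_incidence he]

theorem mem_of_incidence_mem_image {v : α} {e : Finset α} (he : e ∈ E)
    (hv : incidence E v ∈ e.image (incidence E)) : v ∈ e := by
  obtain ⟨u, hu, huv⟩ := mem_image.mp hv
  exact mem_of_incidence_eq huv he hu

theorem card_image_incidence_lt {e : Finset α} {v w : α} (hv : v ∈ e) (hw : w ∈ e)
    (hvw : v ≠ w) (h : incidence E v = incidence E w) :
    (e.image (incidence E)).card < e.card :=
  lt_of_le_of_ne card_image_le fun heq => hvw (card_image_iff.mp heq hv hw h)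

theorem exists_mem_apply_eq_of_mem_image_incidence {c : α → κ}
    {chat : Finset (Finset α) → κ}
    (hrep : ∀ v, ∃ r, incidence E r = incidence E v ∧ c r = chat (incidence E v))
    {e : Finset α} (he : e ∈ E) {s : Finset (Finset α)} (hs : s ∈ e.image (incidence E)) :
    ∃ v ∈ e, c v = chat s := by
  obtain ⟨u, hu, rfl⟩ := mem_image.mp hs
  obtain ⟨r, hru, hcr⟩ := hrep u
  exact ⟨r, mem_of_incidence_eq hru.symm he hu, hcr⟩

theorem incidence_notMem_image_of_not_rainbow {c : α → κ} {chat : Finset (Finset α) → κ}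
    (hrep : ∀ v, ∃ r, incidence E r = incidence E v ∧ c r = chat (incidence E v))
    {e : Finset α} (he : e ∈ E) (hnr : ¬ ∀ i : κ, ∃ v ∈ e, c v = i) {w : α}
    (hcover : ∀ i ≠ c w, ∃ s ∈ e.image (incidence E), chat s = i) :
    incidence E w ∉ e.image (incidence E) := by
  intro hw
  refine hnr fun i => ?_
  rcases eq_or_ne i (c w) with rfl | hi
  · exact ⟨w, mem_of_incidence_mem_image he hw, rfl⟩
  · obtain ⟨s, hs, rfl⟩ := hcover i hi
    exact exists_mem_apply_eq_of_mem_image_incidence hrep he hs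

theorem not_rainbow_update_incidence [Fintype κ] {chat : Finset (Finset α) → κ} {i : κ}
    (hi : ∀ v, chat (incidence E v) ≠ i) {r w : α} (hrw : r ≠ w)
    (hinc : incidence E r = incidence E w) {f : Finset α} (hf : f ∈ E)
    (hcard : f.card = Fintype.card κ) :
    ¬ ∀ j : κ, ∃ s ∈ f.image (incidence E), update chat (incidence E w) i s = j := by
  intro hrain
  obtain ⟨s, hs, hsi⟩ := hrain i
  obtain rfl : s = incidence E w := by
    by_contra hne
    obtain ⟨u, -, rfl⟩ := mem_image.mp hs
    exact hi u (by rwa [update_of_ne hne] at hsi)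
  have hwf := mem_of_incidence_mem_image hf hs
  have hlt := card_image_incidence_lt (mem_of_incidence_eq hinc.symm hf hwf) hwf hrw hinc
  have hle := card_le_card_of_surjOn _ fun j (_ : j ∈ (univ : Finset κ)) => hrain j
  rw [card_univ] at hle
  omega

end Reduction

theorem reduced_noRainbow4_of_rainbow3_general {α : Type*} [Fintype α] [DecidableEq α]
    (E : Finset (Finset α)) (hunif : ∀ e ∈ E, e.card = 4)
    (c : α → Fin 4) (hc : Function.Surjective c)
    (hnr : ∀ e ∈ E, ¬ (∀ i : Fin 4, ∃ v ∈ e, c v = i))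
    (sig : α → Finset (Finset α))
    (hsig : ∀ v : α, sig v = E.filter (fun e => v ∈ e))
    (R : Finset α)
    (hRex : ∀ v : α, ∃ r ∈ R, sig r = sig v)
    (chat : Finset (Finset α) → Fin 4)
    (hchat : ∀ r ∈ R, chat (sig r) = c r)
    (h3 : ((Finset.univ.image sig).image chat).card = 3)
    (hrb : ∃ e ∈ E, ∀ q ∈ (Finset.univ.image sig).image chat,
        ∃ s ∈ e.image sig, chat s = q) :
    ∃ c' : Finset (Finset α) → Fin 4,
      (∀ i : Fin 4, ∃ s ∈ Finset.univ.image sig, c' s = i) ∧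
      ∀ e ∈ E, ¬ (∀ i : Fin 4, ∃ s ∈ e.image sig, c' s = i) := by
  obtain rfl : sig = incidence E := funext hsig
  have hrep : ∀ v, ∃ r, incidence E r = incidence E v ∧ c r = chat (incidence E v) := by
    intro v
    obtain ⟨r, hr, hrv⟩ := hRex v
    exact ⟨r, hrv, by rw [← hchat r hr, hrv]⟩
  obtain ⟨i, hcolor⟩ := exists_forall_mem_iff_ne_of_card_add_one
    (s := (univ.image (incidence E)).image chat) (by simp [h3])
  obtain ⟨e, he, hrainbow⟩ := hrb
  obtain ⟨w, rfl⟩ := hc i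
  obtain ⟨r, hr, hcr⟩ := hrep w
  have hi : ∀ v, chat (incidence E v) ≠ c w := fun v =>
    (hcolor _).mp (mem_image_of_mem _ (mem_image_of_mem _ (mem_univ v)))
  have hcover : ∀ j ≠ c w, ∃ s ∈ e.image (incidence E), chat s = j := fun j hj =>
    hrainbow j ((hcolor j).mpr hj)
  have hrw : r ≠ w := fun h => hi w (by rw [← hcr, h])
  have hwe := incidence_notMem_image_of_not_rainbow hrep he (hnr e he) hcover
  refine ⟨update chat (incidence E w) (c w), fun j => ?_, fun f hf =>
    not_rainbow_update_incidence hi hrw hr hf (hunif f hf)⟩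
  rcases eq_or_ne j (c w) with rfl | hj
  · exact ⟨incidence E w, mem_image_of_mem _ (mem_univ w), update_self ..⟩
  · obtain ⟨s, hs, rfl⟩ := hcover j hj
    obtain ⟨u, -, rfl⟩ := mem_image.mp hs
    exact ⟨incidence E u, mem_image_of_mem _ (mem_univ u),
      update_of_ne (fun h => hwe (by rwa [← h])) ..⟩

/-- Let `(X, E)` be a 4-uniform hypergraph admitting a no-rainbow
4-coloring `c`, let `Ĥ` be its reduced hypergraph (vertices = equivalence classes
under "belongs to exactly the same hyperedges", each class identified with the common
incidence set `sig v = {e ∈ E : v ∈ e}`; hyperedges `e.image sig` for `e ∈ E`), let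
`R ⊆ X` contain exactly one vertex from each class, and let `chat` assign to each
class the `c`-color of its representative in `R`.  If `chat` uses exactly 3 colors and
some hyperedge of `Ĥ` contains classes of all 3 of these colors, then `Ĥ` admits a
no-rainbow 4-coloring. -/
theorem reduced_noRainbow4_of_rainbow3 {α : Type*} [Fintype α] [DecidableEq α]
    (E : Finset (Finset α)) (hunif : ∀ e ∈ E, e.card = 4)
    (c : α → Fin 4) (hc : Function.Surjective c)
    (hnr : ∀ e ∈ E, ¬ (∀ i : Fin 4, ∃ v ∈ e, c v = i))
    (sig : α → Finset (Finset α))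
    (hsig : ∀ v : α, sig v = E.filter (fun e => v ∈ e))
    (R : Finset α)
    (hRex : ∀ v : α, ∃ r ∈ R, sig r = sig v)
    (hRuniq : ∀ r₁ ∈ R, ∀ r₂ ∈ R, sig r₁ = sig r₂ → r₁ = r₂)
    (chat : Finset (Finset α) → Fin 4)
    (hchat : ∀ r ∈ R, chat (sig r) = c r)
    (h3 : ((Finset.univ.image sig).image chat).card = 3)
    (hrb : ∃ e ∈ E, ∀ q ∈ (Finset.univ.image sig).image chat,
        ∃ s ∈ e.image sig, chat s = q) :
    ∃ c' : Finset (Finset α) → Fin 4,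
      (∀ i : Fin 4, ∃ s ∈ Finset.univ.image sig, c' s = i) ∧
      ∀ e ∈ E, ¬ (∀ i : Fin 4, ∃ s ∈ e.image sig, c' s = i) :=
  reduced_noRainbow4_of_rainbow3_general E hunif c hc hnr sig hsig R hRex chat hchat h3 hrb
end
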